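/- A Hausdorff topological group (G, τ) is an s-group (i.e., τ = τ_S for some T_s-set S of sequences) if and only if every sequentially continuous homomorphism from (G, τ) into any Hausdorff topological group is continuous. -/

import Mathlib

open Filter Topology Pointwise

/-- `u` converges to the identity in the group topology `t`. -/
def TendstoOne {G : Type*} [Group G] (t : GroupTopology G) (u : ℕ → G) : Prop :=
  Filter.Tendsto u Filter.atTop (@nhds G t.toTopologicalSpace 1)

/-- The group topology `t` is Hausdorff. -/
def IsHausdorffGT {G : Type*} [Group G] (t : GroupTopology G) : Prop :=
  @T2Space G t.toTopologicalSpace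

/-- `S` is a `T_s`-set of sequences: some Hausdorff group topology makes every
sequence of `S` converge to the identity. -/
def IsTsSet {G : Type*} [Group G] (S : Set (ℕ → G)) : Prop :=
  ∃ t : GroupTopology G, IsHausdorffGT t ∧ ∀ u ∈ S, TendstoOne t u

/-- `τ` is the finest Hausdorff group topology on `G` in which every sequence of `S`
converges to the identity (recall that in Mathlib's order on topologies, finer = smaller). -/
def IsTauS {G : Type*} [Group G] (S : Set (ℕ → G)) (τ : GroupTopology G) : Prop :=
  IsHausdorffGT τ ∧ (∀ u ∈ S, TendstoOne τ u) ∧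
    ∀ t : GroupTopology G, IsHausdorffGT t → (∀ u ∈ S, TendstoOne t u) → τ ≤ t

/-- The given topological-group structure on `G`, as a term of `GroupTopology G`. -/
def ambientGT (G : Type*) [Group G] [τ : TopologicalSpace G] [h : IsTopologicalGroup G] :
    GroupTopology G := ⟨τ, h⟩

/-- The set of all sequences converging to the identity in a group topology. -/
def SeqConvOne {G : Type*} [Group G] (t : GroupTopology G) : Set (ℕ → G) :=
  {u | TendstoOne t u}

/-- `(G, τ)` is an `s`-group: its topology is the finest Hausdorff group topology in which
every member of some `T_s`-set of sequences converges to the identity. -/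
def IsSGroup (G : Type*) [Group G] [TopologicalSpace G] [IsTopologicalGroup G] [T2Space G] :
    Prop :=
  ∃ S : Set (ℕ → G), IsTauS S (ambientGT G)

/-!
If `τ = τ_S` and `p` is sequentially continuous, then `τ ⊓ p⁻¹(τ_X)` is a Hausdorff group topology
in which every sequence of `S` still converges to `1`, so minimality of `τ_S` gives
`τ ≤ p⁻¹(τ_X)`, i.e. `p` is continuous. Conversely, take for `S` all `τ`-null sequences: for a
Hausdorff group topology `t` in which they converge, the identity `(G, τ) → (G, t)` is a
sequentially continuous homomorphism, hence continuous, so `τ` is finer than `t`.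
-/

namespace GroupTopology

variable {G X : Type*} [Group G] [Group X]

def induced [TopologicalSpace X] [IsTopologicalGroup X] (p : G →* X) : GroupTopology G :=
  ⟨TopologicalSpace.induced p inferInstance, topologicalGroup_induced p⟩

theorem tendstoOne_induced_iff [TopologicalSpace X] [IsTopologicalGroup X] {p : G →* X}
    {u : ℕ → G} : TendstoOne (induced p) u ↔ Tendsto (p ∘ u) atTop (𝓝 1) := by
  rw [TendstoOne, show (induced p).toTopologicalSpace = .induced p inferInstance from rfl,
    nhds_induced, tendsto_comap_iff, map_one]

theorem tendstoOne_inf_iff {t₁ t₂ : GroupTopology G} {u : ℕ → G} :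
    TendstoOne (t₁ ⊓ t₂) u ↔ TendstoOne t₁ u ∧ TendstoOne t₂ u := by
  rw [TendstoOne, toTopologicalSpace_inf, nhds_inf, tendsto_inf]
  rfl

theorem isHausdorffGT_inf_left {t₁ : GroupTopology G} (h : IsHausdorffGT t₁)
    (t₂ : GroupTopology G) : IsHausdorffGT (t₁ ⊓ t₂) :=
  t2Space_antitone (inf_le_left : (t₁ ⊓ t₂).toTopologicalSpace ≤ _) h

end GroupTopology

open GroupTopology

theorem MonoidHom.seqContinuous_of_tendsto_one {G X : Type*} [Group G] [TopologicalSpace G]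
    [ContinuousMul G] [Group X] [TopologicalSpace X] [ContinuousMul X] (p : G →* X)
    (h : ∀ u : ℕ → G, Tendsto u atTop (𝓝 1) → Tendsto (p ∘ u) atTop (𝓝 1)) :
    SeqContinuous p := by
  intro u x hu
  have hu_one : Tendsto (fun n ↦ u n * x⁻¹) atTop (𝓝 1) := by
    simpa using hu.mul_const x⁻¹
  simpa [Function.comp_def] using (h _ hu_one).mul_const (p x)

section

variable {G : Type*} [Group G] [TopologicalSpace G] [IsTopologicalGroup G]

theorem IsTauS.continuous_of_seqContinuous {S : Set (ℕ → G)} (hS : IsTauS S (ambientGT G))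
    {X : Type*} [Group X] [TopologicalSpace X] [IsTopologicalGroup X] (p : G →* X)
    (hp : SeqContinuous p) : Continuous p := by
  obtain ⟨hT2, hconv, hmin⟩ := hS
  have hle : ambientGT G ≤ ambientGT G ⊓ induced p :=
    hmin _ (isHausdorffGT_inf_left hT2 _) fun u hu ↦
      tendstoOne_inf_iff.2 ⟨hconv u hu, tendstoOne_induced_iff.2 (by simpa using hp (hconv u hu))⟩
  exact continuous_iff_le_induced.2 (hle.trans inf_le_right)

theorem ambientGT_le_of_forall_tendstoOne {t : GroupTopology G}
    (ht : ∀ u ∈ SeqConvOne (ambientGT G), TendstoOne t u)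
    (hcont : @SeqContinuous G G _ t.toTopologicalSpace (MonoidHom.id G) →
      @Continuous G G _ t.toTopologicalSpace (MonoidHom.id G)) :
    ambientGT G ≤ t := by
  have hseq : @SeqContinuous G G _ t.toTopologicalSpace (MonoidHom.id G) :=
    @MonoidHom.seqContinuous_of_tendsto_one G G _ _ _ _ t.toTopologicalSpace
      t.toIsTopologicalGroup.toContinuousMul _ ht
  exact toTopologicalSpace_le.1 (continuous_id_iff_le.1 (hcont hseq))

end

/-- a Hausdorff topological group `(G, τ)` is an `s`-group (its topology is
`τ_S` for some `T_s`-set `S`) iff every sequentially continuous homomorphism from `(G, τ)`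
into any Hausdorff topological group is continuous. -/
theorem stmt6 {G : Type u} [Group G] [TopologicalSpace G] [IsTopologicalGroup G] [T2Space G] :
    IsSGroup G ↔
      ∀ (X : Type u) (_ : Group X) (_ : TopologicalSpace X) (_ : IsTopologicalGroup X)
        (_ : T2Space X) (p : G →* X), SeqContinuous p → Continuous p := by
  constructor
  · rintro ⟨S, hS⟩ X _ _ _ _ p hp
    exact hS.continuous_of_seqContinuous p hp
  · intro h
    refine ⟨SeqConvOne (ambientGT G), ‹T2Space G›, fun u hu ↦ hu, fun t ht hS ↦ ?_⟩
    exact ambientGT_le_of_forall_tendstoOne hS (h G _ _ t.toIsTopologicalGroup ht _)
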